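/- Let G be a locally compact Hausdorff topological group, let (Γₙ) be a uniformly discrete sequence of cocompact lattices in G, and let Γ_∞ be a subgroup of G that is a normal subgroup of Γₙ for every n. Then the following are equivalent: (a) (Γₙ) BS-converges to Γ_∞, i.e., for every compact set C ⊆ G, P_{Γₙ\G}({x ∈ Γₙ\G : x⁻¹(Γₙ ∖ Γ_∞)x ∩ C ≠ ∅}) → 0 as n → ∞; (b) (Γₙ) Plancherel-converges to Γ_∞, i.e., for every compact set C ⊆ G, ∫_{Γₙ\G} #(x⁻¹(Γₙ ∖ Γ_∞)x ∩ C) dP_{Γₙ\G}(x) → 0 as n → ∞. -/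

import Mathlib

/-!
Uniform discreteness bounds `#(x⁻¹(Γₙ ∖ Γ_∞)x ∩ C)` by a constant `K` depending only on `C`:
finitely many left translates of a small identity neighbourhood cover `C`, and each of them
contains at most one point of a uniformly discrete set. Hence the counting function is
squeezed between the indicator of the bad set `{x | x⁻¹(Γₙ ∖ Γ_∞)x ∩ C ≠ ∅}` and `K` times
it, and the two integrals tend to zero together. The bad set is measurable because it is
closed: since the same bound makes `Γₙ ∩ K` finite for every compact `K`, it is a locally finite
union of the closed sets `{x | x⁻¹γx ∈ C}`.
-/

open MeasureTheory Filter Topology Set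
open scoped ENNReal Pointwise

/-- Right translation by `g ∈ G` on the right coset space `Γ\G`. -/
def rightTranslate {G : Type*} [Group G] (Γ : Subgroup G) (g : G) :
    Quotient (QuotientGroup.rightRel Γ) → Quotient (QuotientGroup.rightRel Γ) :=
  Quotient.map' (fun x => x * g) (by
    intro a b h
    rw [QuotientGroup.rightRel_apply] at h ⊢
    have e : (b * g) * (a * g)⁻¹ = b * a⁻¹ := by group
    rw [e]; exact h)

section Measure

variable {ι : Type*} {l : Filter ι} {α : ι → Type*} [∀ i, MeasurableSpace (α i)]
  {μ : ∀ i, Measure (α i)} {s : ∀ i, Set (α i)} {f : ∀ i, α i → ℝ≥0∞}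

theorem tendsto_lintegral_zero_of_le_of_eq_zero {c : ℝ≥0∞} (hc : c ≠ ∞)
    (hle : ∀ i a, f i a ≤ c) (hzero : ∀ i, ∀ a ∉ s i, f i a = 0)
    (hs : Tendsto (fun i => μ i (s i)) l (𝓝 0)) :
    Tendsto (fun i => ∫⁻ a, f i a ∂(μ i)) l (𝓝 0) := by
  have hbound : ∀ i, ∫⁻ a, f i a ∂(μ i) ≤ c * μ i (s i) := fun i =>
    calc ∫⁻ a, f i a ∂(μ i) ≤ ∫⁻ a, (s i).indicator (fun _ => c) a ∂(μ i) := by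
          refine lintegral_mono fun a => ?_
          by_cases ha : a ∈ s i
          · simp [ha, hle]
          · simp [ha, hzero i a ha]
      _ ≤ c * μ i (s i) := lintegral_indicator_const_le _ _
  have hcs : Tendsto (fun i => c * μ i (s i)) l (𝓝 0) := by
    simpa using ENNReal.Tendsto.const_mul hs (Or.inr hc)
  exact tendsto_of_tendsto_of_tendsto_of_le_of_le tendsto_const_nhds hcs (fun _ => zero_le) hbound

theorem tendsto_measure_zero_of_one_le (hs : ∀ i, MeasurableSet (s i))
    (hone : ∀ i, ∀ a ∈ s i, 1 ≤ f i a) (hf : Tendsto (fun i => ∫⁻ a, f i a ∂(μ i)) l (𝓝 0)) :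
    Tendsto (fun i => μ i (s i)) l (𝓝 0) := by
  refine tendsto_of_tendsto_of_tendsto_of_le_of_le tendsto_const_nhds hf (fun _ => zero_le)
    fun i => ?_
  calc μ i (s i) = ∫⁻ _ in s i, 1 ∂(μ i) := (setLIntegral_one _).symm
    _ ≤ ∫⁻ a in s i, f i a ∂(μ i) := setLIntegral_mono' (hs i) (hone i)
    _ ≤ ∫⁻ a, f i a ∂(μ i) := setLIntegral_le_lintegral _ _

end Measure

section Group

variable {G : Type*} [Group G]

def conjInter (S C : Set G) (x : G) : Set G := (fun γ => x⁻¹ * γ * x) '' S ∩ C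

theorem conjInter_mul_left {S : Set G} {γ : G} (hS : (fun s => γ⁻¹ * s * γ) '' S = S)
    (C : Set G) (x : G) : conjInter S C (γ * x) = conjInter S C x := by
  unfold conjInter
  conv_rhs => rw [← hS, image_image]
  congr 2
  funext s
  group

theorem mul_mul_inv_mem_diff {H N : Subgroup G} (hN : ∀ γ ∈ H, ∀ δ ∈ N, γ * δ * γ⁻¹ ∈ N)
    {g s : G} (hg : g ∈ H) (hs : s ∈ (H : Set G) \ N) : g * s * g⁻¹ ∈ (H : Set G) \ N := by
  refine ⟨mul_mem (mul_mem hg hs.1) (inv_mem hg), fun hmem => hs.2 ?_⟩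
  simpa [mul_assoc] using hN g⁻¹ (inv_mem hg) _ hmem

theorem conj_image_diff_eq {H N : Subgroup G} (hN : ∀ γ ∈ H, ∀ δ ∈ N, γ * δ * γ⁻¹ ∈ N)
    {γ : G} (hγ : γ ∈ H) : (fun s => γ⁻¹ * s * γ) '' ((H : Set G) \ N) = (H : Set G) \ N := by
  refine Subset.antisymm ?_ fun s hs => ⟨γ * s * γ⁻¹, mul_mul_inv_mem_diff hN hγ hs, by group⟩
  rintro _ ⟨s, hs, rfl⟩
  simpa using mul_mul_inv_mem_diff hN (inv_mem hγ) hs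

theorem conjInter_diff_eq_of_rightRel {H N : Subgroup G}
    (hN : ∀ γ ∈ H, ∀ δ ∈ N, γ * δ * γ⁻¹ ∈ N) {a b : G} (h : QuotientGroup.rightRel H a b)
    (C : Set G) : conjInter ((H : Set G) \ N) C a = conjInter ((H : Set G) \ N) C b := by
  rw [QuotientGroup.rightRel_apply] at h
  simpa using (conjInter_mul_left (conj_image_diff_eq hN h) C a).symm

theorem conj_image_separated {H : Subgroup G} {S U : Set G} (hS : S ⊆ H) {x : G}
    (hx : (fun γ => x⁻¹ * γ * x) '' (H : Set G) ∩ U = {1}) :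
    ∀ a ∈ (fun γ => x⁻¹ * γ * x) '' S, ∀ b ∈ (fun γ => x⁻¹ * γ * x) '' S,
      a⁻¹ * b ∈ U → a = b := by
  rintro _ ⟨γ, hγ, rfl⟩ _ ⟨δ, hδ, rfl⟩ hU
  have hmem : (x⁻¹ * γ * x)⁻¹ * (x⁻¹ * δ * x) ∈ (fun γ => x⁻¹ * γ * x) '' (H : Set G) ∩ U :=
    ⟨⟨γ⁻¹ * δ, mul_mem (inv_mem (hS hγ)) (hS hδ), by group⟩, hU⟩
  rw [hx] at hmem
  exact inv_mul_eq_one.1 hmem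

variable [TopologicalSpace G] [IsTopologicalGroup G]

theorem exists_encard_inter_le_of_separated {U C : Set G} (hU : U ∈ 𝓝 1) (hC : IsCompact C) :
    ∃ K : ℕ, ∀ A : Set G, (∀ a ∈ A, ∀ b ∈ A, a⁻¹ * b ∈ U → a = b) → (A ∩ C).encard ≤ K := by
  obtain ⟨V, hV, -, hVinv, hVU⟩ := exists_closed_nhds_one_inv_eq_mul_subset hU
  obtain ⟨t, ht⟩ :=
    compact_covered_by_mul_left_translates hC ⟨1, mem_interior_iff_mem_nhds.2 hV⟩
  refine ⟨t.card, fun A hA => ?_⟩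
  have hcover : ∀ a ∈ A ∩ C, ∃ g ∈ t, g * a ∈ V := fun a ha => by simpa using ht ha.2
  choose! g hgt hgV using hcover
  have hinj : InjOn g (A ∩ C) := fun a ha b hb hab => hA a ha.1 b hb.1 <| hVU <| by
    have hinv : (g a * a)⁻¹ ∈ V := hVinv ▸ inv_mem_inv.2 (hgV a ha)
    convert mul_mem_mul hinv (hgV b hb) using 1
    rw [hab]
    group
  calc (A ∩ C).encard ≤ (t : Set G).encard := encard_le_encard_of_injOn hgt hinj
    _ = t.card := encard_coe_eq_coe_finsetCard t

theorem exists_encard_conjInter_le {U C : Set G} (hU : U ∈ 𝓝 1) (hC : IsCompact C) :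
    ∃ K : ℕ, ∀ (H : Subgroup G) (S : Set G), S ⊆ H → ∀ x : G,
      (fun γ => x⁻¹ * γ * x) '' (H : Set G) ∩ U = {1} → (conjInter S C x).encard ≤ K := by
  obtain ⟨K, hK⟩ := exists_encard_inter_le_of_separated hU hC
  exact ⟨K, fun H S hS x hx => hK _ (conj_image_separated hS hx)⟩

variable [LocallyCompactSpace G] [T2Space G]

theorem isClosed_setOf_conjInter_nonempty {S C : Set G}
    (hS : ∀ K, IsCompact K → (S ∩ K).Finite) (hC : IsCompact C) :
    IsClosed {x : G | (conjInter S C x).Nonempty} := by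
  have hunion :
      {x : G | (conjInter S C x).Nonempty} = ⋃ s : S, (fun x => x⁻¹ * (s : G) * x) ⁻¹' C := by
    ext x
    simp [conjInter, Set.Nonempty]
  rw [hunion]
  refine LocallyFinite.isClosed_iUnion (fun x => ?_) fun s => hC.isClosed.preimage (by fun_prop)
  obtain ⟨V, hVcpt, hV⟩ := exists_compact_mem_nhds x
  refine ⟨V, hV, ((hS _ ((hVcpt.mul hC).mul hVcpt.inv)).preimage
    Subtype.val_injective.injOn).subset ?_⟩
  rintro ⟨s, hs⟩ ⟨y, hyC, hyV⟩
  refine ⟨hs, ?_⟩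
  convert mul_mem_mul (mul_mem_mul hyV (show y⁻¹ * s * y ∈ C from hyC)) (inv_mem_inv.2 hyV) using 1
  group

theorem measurableSet_setOf_exists_conjInter_nonempty [MeasurableSpace G] [BorelSpace G]
    {H N : Subgroup G} (hN : ∀ γ ∈ H, ∀ δ ∈ N, γ * δ * γ⁻¹ ∈ N)
    (hH : ∀ K, IsCompact K → ((H : Set G) ∩ K).Finite) {C : Set G} (hC : IsCompact C) :
    MeasurableSet {q : Quotient (QuotientGroup.rightRel H) |
      ∃ x : G, Quotient.mk'' x = q ∧ (conjInter ((H : Set G) \ N) C x).Nonempty} := by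
  rw [measurableSet_quotient]
  convert (isClosed_setOf_conjInter_nonempty (S := (H : Set G) \ N) (fun K hK => (hH K hK).subset
    (inter_subset_inter_left _ sdiff_subset)) hC).measurableSet using 1
  ext x
  constructor
  · rintro ⟨y, hyx, hy⟩
    exact (conjInter_diff_eq_of_rightRel hN (Quotient.eq''.1 hyx) C ▸ hy :)
  · exact fun hx => ⟨x, rfl, hx⟩

end Group

theorem stmt3_general {G : Type*} [Group G] [TopologicalSpace G] [IsTopologicalGroup G]
    [LocallyCompactSpace G] [T2Space G] [MeasurableSpace G] [BorelSpace G]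
    (Γ : ℕ → Subgroup G) (Γinf : Subgroup G)
    (hnorm : ∀ n, ∀ γ ∈ Γ n, ∀ δ ∈ Γinf, γ * δ * γ⁻¹ ∈ Γinf)
    (hud : ∃ U ∈ nhds (1 : G), ∀ (n : ℕ) (x : G),
      ((fun γ => x⁻¹ * γ * x) '' ((Γ n : Set G))) ∩ U = {1})
    (P : ∀ n : ℕ, Measure (Quotient (QuotientGroup.rightRel (Γ n)))) :
    (∀ C : Set G, IsCompact C →
      Tendsto (fun n => P n {q | ∃ x : G, Quotient.mk'' x = q ∧
          (((fun γ => x⁻¹ * γ * x) '' ((Γ n : Set G) \ (Γinf : Set G))) ∩ C).Nonempty})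
        atTop (𝓝 0))
    ↔
    (∀ C : Set G, IsCompact C →
      ∀ F : (n : ℕ) → Quotient (QuotientGroup.rightRel (Γ n)) → ℝ≥0∞,
        (∀ (n : ℕ) (x : G), F n (Quotient.mk'' x) =
          ((((fun γ => x⁻¹ * γ * x) '' ((Γ n : Set G) \ (Γinf : Set G))) ∩ C).encard : ℝ≥0∞)) →
        Tendsto (fun n => ∫⁻ q, F n q ∂(P n)) atTop (𝓝 0)) := by
  obtain ⟨U, hU, hUsep⟩ := hud
  have hfin : ∀ n K, IsCompact K → ((Γ n : Set G) ∩ K).Finite := fun n K hK => by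
    obtain ⟨k, hk⟩ := exists_encard_conjInter_le hU hK
    simpa [conjInter] using finite_of_encard_le_coe (hk (Γ n) _ subset_rfl 1 (hUsep n 1))
  constructor
  · intro hBS C hC F hF
    obtain ⟨K, hK⟩ := exists_encard_conjInter_le hU hC
    refine tendsto_lintegral_zero_of_le_of_eq_zero (ENNReal.natCast_ne_top K) (fun n q => ?_)
      (fun n q hq => ?_) (hBS C hC)
    · obtain ⟨x, rfl⟩ := Quotient.mk''_surjective q
      rw [hF]
      exact_mod_cast hK (Γ n) _ sdiff_subset x (hUsep n x)
    · obtain ⟨x, rfl⟩ := Quotient.mk''_surjective q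
      rw [hF, not_nonempty_iff_eq_empty.1 fun hne => hq ⟨x, rfl, hne⟩]
      simp
  · intro hPl C hC
    refine tendsto_measure_zero_of_one_le
      (fun n => measurableSet_setOf_exists_conjInter_nonempty (hnorm n) (hfin n) hC) ?_
      (hPl C hC (fun n => Quotient.lift (fun x => ((conjInter _ C x).encard : ℝ≥0∞))
        fun a b h => by rw [conjInter_diff_eq_of_rightRel (hnorm n) h]) fun n x => rfl)
    rintro n _ ⟨x, rfl, hx⟩
    change (1 : ℝ≥0∞) ≤ ((conjInter _ C x).encard : ℝ≥0∞)
    exact_mod_cast one_le_encard_iff_nonempty.2 hx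

/-- Theorem 3.3.  Let `G` be a locally compact Hausdorff topological
group, `(Γₙ)` a uniformly discrete sequence of cocompact lattices, `Γ_∞` a common
normal subgroup of all the `Γₙ`, and `P n` the invariant Borel probability measure on
`Γₙ\G`.  Then `(Γₙ)` BS-converges to `Γ_∞` iff `(Γₙ)` Plancherel-converges to `Γ_∞`. -/
theorem stmt3 {G : Type*} [Group G] [TopologicalSpace G] [IsTopologicalGroup G]
    [LocallyCompactSpace G] [T2Space G] [MeasurableSpace G] [BorelSpace G]
    (Γ : ℕ → Subgroup G) (Γinf : Subgroup G)
    (hle : ∀ n, Γinf ≤ Γ n)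
    (hnorm : ∀ n, ∀ γ ∈ Γ n, ∀ δ ∈ Γinf, γ * δ * γ⁻¹ ∈ Γinf)
    (hdisc : ∀ n, DiscreteTopology ↥(Γ n))
    (hcocpt : ∀ n, CompactSpace (Quotient (QuotientGroup.rightRel (Γ n))))
    (hud : ∃ U ∈ nhds (1 : G), ∀ (n : ℕ) (x : G),
      ((fun γ => x⁻¹ * γ * x) '' ((Γ n : Set G))) ∩ U = {1})
    (P : ∀ n : ℕ, Measure (Quotient (QuotientGroup.rightRel (Γ n))))
    (hP : ∀ n, IsProbabilityMeasure (P n))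
    (hPinv : ∀ (n : ℕ) (g : G), MeasurePreserving (rightTranslate (Γ n) g) (P n) (P n)) :
    (∀ C : Set G, IsCompact C →
      Tendsto (fun n => P n {q | ∃ x : G, Quotient.mk'' x = q ∧
          (((fun γ => x⁻¹ * γ * x) '' ((Γ n : Set G) \ (Γinf : Set G))) ∩ C).Nonempty})
        atTop (𝓝 0))
    ↔
    (∀ C : Set G, IsCompact C →
      ∀ F : (n : ℕ) → Quotient (QuotientGroup.rightRel (Γ n)) → ℝ≥0∞,
        (∀ (n : ℕ) (x : G), F n (Quotient.mk'' x) =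
          ((((fun γ => x⁻¹ * γ * x) '' ((Γ n : Set G) \ (Γinf : Set G))) ∩ C).encard : ℝ≥0∞)) →
        Tendsto (fun n => ∫⁻ q, F n q ∂(P n)) atTop (𝓝 0)) :=
  stmt3_general Γ Γinf hnorm hud P
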